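/- Suppose M > L_g‖L_p‖, μ > M + L_g‖L_p‖, δ ≥ 0, (x_k)_{k≥0} is a RHOTA sequence satisfying the inexact optimality condition for each k, and y_{k+1} is a global minimizer over C of y ↦ f(y) + (μ/(p+1)!)‖y − x_k‖^{p+1}. Assume moreover the KL-type bound f(y_{k+1}) − f_* ≤ σ_q ((μ/p!)‖y_{k+1} − x_k‖^{p})^{q} for all k ≥ 0. Then, with C₁ := σ_q L_μ^{pq/(p+1)} (μ/p!)^{q} ((p+1)!/(M − L_g‖L_p‖))^{pq/(p+1)} and C₂ := (L_μ(M + L_g‖L_p‖) + δ + L_g‖L_p‖ − M)/(M − L_g‖L_p‖), for every k ≥ 0: f(x_{k+1}) − f_* ≤ C₁ (f(x_k) − f(x_{k+1}))^{pq/(p+1)} + C₂ (f(x_k) − f(x_{k+1})). -/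

import Mathlib

open scoped BigOperators RealInnerProductSpace

noncomputable section

/-- The vector `(F_1(x), …, F_m(x)) ∈ ℝ^m` (with the Euclidean norm). -/
def euclMap {n m : ℕ} (F : Fin m → EuclideanSpace ℝ (Fin n) → ℝ)
    (x : EuclideanSpace ℝ (Fin n)) : EuclideanSpace ℝ (Fin m) :=
  (EuclideanSpace.equiv (Fin m) ℝ).symm fun i => F i x

/-- The vector `T_p^F(y; x)` of `p`-th order Taylor approximations of the components
`F_i` around the center `x`, evaluated at `y`. -/
def taylorMap (p : ℕ) {n m : ℕ} (F : Fin m → EuclideanSpace ℝ (Fin n) → ℝ)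
    (y x : EuclideanSpace ℝ (Fin n)) : EuclideanSpace ℝ (Fin m) :=
  (EuclideanSpace.equiv (Fin m) ℝ).symm fun i =>
    ∑ j ∈ Finset.range (p + 1),
      (1 / (Nat.factorial j : ℝ)) * iteratedFDeriv ℝ j (F i) x (fun _ => y - x)

/-- The composite objective `f(x) = g(F(x)) + h(x)`. -/
def fObj {n m : ℕ} (F : Fin m → EuclideanSpace ℝ (Fin n) → ℝ)
    (g : EuclideanSpace ℝ (Fin m) → ℝ) (h : EuclideanSpace ℝ (Fin n) → ℝ)
    (x : EuclideanSpace ℝ (Fin n)) : ℝ :=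
  g (euclMap F x) + h x

/-- The regularized higher-order Taylor model
`s_M(y; x̄) = g(T_p^F(y; x̄)) + (M/(p+1)!)‖y − x̄‖^{p+1} + h(y)`. -/
def sModel (p : ℕ) {n m : ℕ} (F : Fin m → EuclideanSpace ℝ (Fin n) → ℝ)
    (g : EuclideanSpace ℝ (Fin m) → ℝ) (h : EuclideanSpace ℝ (Fin n) → ℝ) (M : ℝ)
    (y xb : EuclideanSpace ℝ (Fin n)) : ℝ :=
  g (taylorMap p F y xb) + M / (Nat.factorial (p + 1) : ℝ) * ‖y - xb‖ ^ (p + 1) + h y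

/-! With `c = L_g‖L_p‖`, the Taylor estimate for a Lipschitz `p`-th derivative and the Lipschitz
continuity of `g` sandwich the model between `f(z) + (M ∓ c)/(p+1)! ‖z - x‖^(p+1)`. Put
`r = ‖x_{k+1} - x_k‖` and `s = ‖y_{k+1} - x_k‖`. Descent of the model gives
`(M - c) r^(p+1) ≤ (p+1)! (f(x_k) - f(x_{k+1}))`. The proximal point lies in the ball of radius
`D_k`, so inexact optimality compares the model at `x_{k+1}` with the model at `y_{k+1}`; adding the
optimality of `y_{k+1}` tested at `x_{k+1}` yields `s^(p+1) ≤ L_μ r^(p+1)`. Finally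
`f(x_{k+1}) ≤ f(y_{k+1}) + ((M + c) s^(p+1) + (δ + c - M) r^(p+1))/(p+1)!`, and the KL bound at
`y_{k+1}`, rewritten through `(s^p)^q = (s^(p+1))^(pq/(p+1))`, turns both terms into powers of
`f(x_k) - f(x_{k+1})`. -/

open scoped Nat
open Finset

theorem hasDerivAt_sum_range_one_div_factorial_mul_pow (d : ℕ → ℝ) (k : ℕ) (u : ℝ) :
    HasDerivAt (fun u => ∑ j ∈ range (k + 2), 1 / (j ! : ℝ) * d j * u ^ j)
      (∑ j ∈ range (k + 1), 1 / (j ! : ℝ) * d (j + 1) * u ^ j) u := by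
  have hsplit : (fun u => ∑ j ∈ range (k + 2), 1 / (j ! : ℝ) * d j * u ^ j) =
      fun u => ∑ j ∈ range (k + 1), 1 / ((j + 1)! : ℝ) * d (j + 1) * u ^ (j + 1) + d 0 := by
    ext u
    simp [sum_range_succ' _ (k + 1)]
  rw [hsplit]
  refine (HasDerivAt.fun_sum fun j _ => (hasDerivAt_pow (j + 1) u).const_mul _).add_const _
    |>.congr_deriv (sum_congr rfl fun j _ => ?_)
  rw [Nat.factorial_succ]
  push_cast
  field_simp

theorem abs_sub_taylor_le_of_lipschitz_iteratedDeriv (k : ℕ) {f : ℝ → ℝ} {ℓ : ℝ}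
    (hf : ContDiff ℝ k f)
    (hlip : ∀ s t, |iteratedDeriv k f s - iteratedDeriv k f t| ≤ ℓ * |s - t|)
    {t : ℝ} (ht : 0 ≤ t) :
    |f t - ∑ j ∈ range (k + 1), 1 / (j ! : ℝ) * iteratedDeriv j f 0 * t ^ j|
      ≤ ℓ * t ^ (k + 1) / (k + 1)! := by
  -- The remainder of order `k + 1` has the remainder of order `k` of `deriv f` as derivative,
  -- so the bound for `deriv f` integrates to the next one.
  induction k generalizing f t with
  | zero => simpa [abs_of_nonneg ht] using hlip t 0
  | succ k ih =>
    have hdiff : Differentiable ℝ f := hf.differentiable (by simp)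
    have hderiv : ContDiff ℝ k (deriv f) :=
      (contDiff_succ_iff_deriv.mp (by exact_mod_cast hf)).2.2
    have hrem : ∀ u, HasDerivAt
        (fun u => f u - ∑ j ∈ range (k + 2), 1 / (j ! : ℝ) * iteratedDeriv j f 0 * u ^ j)
        (deriv f u - ∑ j ∈ range (k + 1), 1 / (j ! : ℝ) * iteratedDeriv j (deriv f) 0 * u ^ j)
        u := fun u => by
      simpa only [iteratedDeriv_succ'] using (hdiff u).hasDerivAt.fun_sub
        (hasDerivAt_sum_range_one_div_factorial_mul_pow (fun j => iteratedDeriv j f 0) k u)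
    have hbound : ∀ u, HasDerivAt (fun u => ℓ * u ^ (k + 2) / (k + 2)!)
        (ℓ * u ^ (k + 1) / (k + 1)!) u := fun u => by
      refine (((hasDerivAt_pow (k + 2) u).const_mul ℓ).div_const _).congr_deriv ?_
      rw [Nat.factorial_succ (k + 1)]
      push_cast
      field_simp
      ring
    have := image_norm_le_of_norm_deriv_right_le_deriv_boundary (a := 0) (b := t)
      (fun u _ => (hrem u).continuousAt.continuousWithinAt) (fun u _ => (hrem u).hasDerivWithinAt)
      (by simp [sum_range_succ']) hbound
      (fun u hu => ih hderiv (by simpa only [iteratedDeriv_succ'] using hlip) hu.1)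
      ⟨ht, le_rfl⟩
    simpa only [Real.norm_eq_abs] using this

section Line

variable {E : Type*} [NormedAddCommGroup E] [NormedSpace ℝ E]

theorem iteratedDeriv_comp_add_smul {f : E → ℝ} {N : ℕ} (hf : ContDiff ℝ N f) {j : ℕ}
    (hj : j ≤ N) (x v : E) (t : ℝ) :
    iteratedDeriv j (fun t : ℝ => f (x + t • v)) t =
      iteratedFDeriv ℝ j f (x + t • v) fun _ => v := by
  have hshift : ContDiff ℝ N fun u => f (x + u) := hf.comp (contDiff_const.add contDiff_id)
  have hline : (fun t : ℝ => f (x + t • v)) =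
      (fun u => f (x + u)) ∘ ContinuousLinearMap.toSpanSingleton ℝ v := by
    ext t
    simp
  rw [iteratedDeriv_eq_iteratedFDeriv, hline,
    ContinuousLinearMap.iteratedFDeriv_comp_right _ hshift _ (by exact_mod_cast hj),
    iteratedFDeriv_comp_add_left]
  simp

theorem abs_sub_taylor_le_of_lipschitz_iteratedFDeriv {p : ℕ} {f : E → ℝ} (hf : ContDiff ℝ p f)
    {L : ℝ} (hlip : ∀ a b, ‖iteratedFDeriv ℝ p f a - iteratedFDeriv ℝ p f b‖ ≤ L * ‖a - b‖)
    (x y : E) :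
    |f y - ∑ j ∈ range (p + 1), 1 / (j ! : ℝ) * iteratedFDeriv ℝ j f x (fun _ => y - x)|
      ≤ L / (p + 1)! * ‖y - x‖ ^ (p + 1) := by
  set v := y - x
  have hline := fun {j} (hj : j ≤ p) => iteratedDeriv_comp_add_smul hf hj x v
  have hlip_line : ∀ s t : ℝ, |iteratedDeriv p (fun t : ℝ => f (x + t • v)) s -
      iteratedDeriv p (fun t : ℝ => f (x + t • v)) t| ≤ L * ‖v‖ ^ (p + 1) * |s - t| := by
    intro s t
    rw [hline le_rfl, hline le_rfl, ← sub_apply, ← Real.norm_eq_abs]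
    calc _ ≤ ‖iteratedFDeriv ℝ p f (x + s • v) - iteratedFDeriv ℝ p f (x + t • v)‖ *
          ∏ _ : Fin p, ‖v‖ := ContinuousMultilinearMap.le_opNorm _ _
      _ ≤ L * ‖(s - t) • v‖ * ‖v‖ ^ p := by
          rw [prod_const, card_univ, Fintype.card_fin, sub_smul, ← add_sub_add_left_eq_sub _ _ x]
          gcongr
          exact hlip _ _
      _ = L * ‖v‖ ^ (p + 1) * |s - t| := by
          rw [norm_smul, Real.norm_eq_abs]
          ring
  have htaylor := abs_sub_taylor_le_of_lipschitz_iteratedDeriv p (f := fun t : ℝ => f (x + t • v))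
    (hf.comp (contDiff_const.add (contDiff_id.smul contDiff_const))) hlip_line zero_le_one
  rw [sum_congr rfl fun j hj => by rw [hline (Nat.lt_succ_iff.mp (mem_range.mp hj))]] at htaylor
  simpa [v] using htaylor.trans_eq
    (by ring : L * ‖v‖ ^ (p + 1) * 1 ^ (p + 1) / ((p + 1)! : ℝ) = L / (p + 1)! * ‖v‖ ^ (p + 1))

end Line

theorem EuclideanSpace.norm_le_norm_mul_of_abs_le {ι : Type*} [Fintype ι]
    {w v : EuclideanSpace ℝ ι} {c : ℝ} (hc : 0 ≤ c) (h : ∀ i, |w i| ≤ v i * c) :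
    ‖w‖ ≤ ‖v‖ * c := by
  calc ‖w‖ = √(∑ i, ‖w i‖ ^ 2) := EuclideanSpace.norm_eq w
    _ ≤ √(∑ i, (‖v i‖ * c) ^ 2) := by
        gcongr with i
        exact (h i).trans (mul_le_mul_of_nonneg_right (le_abs_self _) hc)
    _ = ‖v‖ * c := by
        simp_rw [mul_pow]
        rw [← sum_mul, Real.sqrt_mul (by positivity), Real.sqrt_sq hc, EuclideanSpace.norm_eq]

theorem nonneg_of_forall_abs_sub_le_mul_norm {E : Type*} [NormedAddCommGroup E] [Nontrivial E]
    {g : E → ℝ} {L : ℝ} (h : ∀ a b, |g a - g b| ≤ L * ‖a - b‖) : 0 ≤ L := by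
  obtain ⟨a, ha⟩ := exists_ne (0 : E)
  exact nonneg_of_mul_nonneg_left ((abs_nonneg _).trans (by simpa using h a 0))
    (norm_pos_iff.mpr ha)

section CompositeModel

theorem taylorMap_self {n m : ℕ} (p : ℕ) (F : Fin m → EuclideanSpace ℝ (Fin n) → ℝ)
    (x : EuclideanSpace ℝ (Fin n)) : taylorMap p F x x = euclMap F x := by
  ext i
  simp [taylorMap, euclMap, sum_range_succ', ← Pi.zero_def]

theorem sModel_self {n m : ℕ} (p : ℕ) (F : Fin m → EuclideanSpace ℝ (Fin n) → ℝ)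
    (g : EuclideanSpace ℝ (Fin m) → ℝ) (h : EuclideanSpace ℝ (Fin n) → ℝ) (M : ℝ)
    (x : EuclideanSpace ℝ (Fin n)) : sModel p F g h M x x = fObj F g h x := by
  simp [sModel, fObj, taylorMap_self]

variable {n m p : ℕ} {F : Fin m → EuclideanSpace ℝ (Fin n) → ℝ} {Lp : EuclideanSpace ℝ (Fin m)}
  {g : EuclideanSpace ℝ (Fin m) → ℝ} {Lg : ℝ}

theorem norm_euclMap_sub_taylorMap_le (hF : ∀ i, ContDiff ℝ p (F i))
    (hFlip : ∀ i (x y : EuclideanSpace ℝ (Fin n)),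
      ‖iteratedFDeriv ℝ p (F i) x - iteratedFDeriv ℝ p (F i) y‖ ≤ Lp i * ‖x - y‖)
    (z x : EuclideanSpace ℝ (Fin n)) :
    ‖euclMap F z - taylorMap p F z x‖ ≤ ‖Lp‖ / (p + 1)! * ‖z - x‖ ^ (p + 1) := by
  rw [div_mul_eq_mul_div, mul_div_assoc]
  refine EuclideanSpace.norm_le_norm_mul_of_abs_le (by positivity) fun i => ?_
  exact (abs_sub_taylor_le_of_lipschitz_iteratedFDeriv (hF i) (hFlip i) x z).trans_eq (by ring)

theorem abs_comp_euclMap_sub_comp_taylorMap_le (hF : ∀ i, ContDiff ℝ p (F i))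
    (hFlip : ∀ i (x y : EuclideanSpace ℝ (Fin n)),
      ‖iteratedFDeriv ℝ p (F i) x - iteratedFDeriv ℝ p (F i) y‖ ≤ Lp i * ‖x - y‖)
    (hLg : 0 ≤ Lg) (hglip : ∀ a b, |g a - g b| ≤ Lg * ‖a - b‖) (z x : EuclideanSpace ℝ (Fin n)) :
    |g (euclMap F z) - g (taylorMap p F z x)| ≤ Lg * ‖Lp‖ / (p + 1)! * ‖z - x‖ ^ (p + 1) :=
  calc |g (euclMap F z) - g (taylorMap p F z x)|
      ≤ Lg * ‖euclMap F z - taylorMap p F z x‖ := hglip _ _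
    _ ≤ Lg * (‖Lp‖ / (p + 1)! * ‖z - x‖ ^ (p + 1)) := by
        gcongr
        exact norm_euclMap_sub_taylorMap_le hF hFlip z x
    _ = Lg * ‖Lp‖ / (p + 1)! * ‖z - x‖ ^ (p + 1) := by ring

theorem fObj_add_le_sModel (hF : ∀ i, ContDiff ℝ p (F i))
    (hFlip : ∀ i (x y : EuclideanSpace ℝ (Fin n)),
      ‖iteratedFDeriv ℝ p (F i) x - iteratedFDeriv ℝ p (F i) y‖ ≤ Lp i * ‖x - y‖)
    (hLg : 0 ≤ Lg) (hglip : ∀ a b, |g a - g b| ≤ Lg * ‖a - b‖)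
    (h : EuclideanSpace ℝ (Fin n) → ℝ) (M : ℝ) (z x : EuclideanSpace ℝ (Fin n)) :
    fObj F g h z + (M - Lg * ‖Lp‖) / (p + 1)! * ‖z - x‖ ^ (p + 1) ≤ sModel p F g h M z x := by
  have := abs_le.mp (abs_comp_euclMap_sub_comp_taylorMap_le hF hFlip hLg hglip z x)
  simp only [fObj, sModel, sub_div, sub_mul] at *
  linarith

theorem sModel_le_fObj_add (hF : ∀ i, ContDiff ℝ p (F i))
    (hFlip : ∀ i (x y : EuclideanSpace ℝ (Fin n)),
      ‖iteratedFDeriv ℝ p (F i) x - iteratedFDeriv ℝ p (F i) y‖ ≤ Lp i * ‖x - y‖)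
    (hLg : 0 ≤ Lg) (hglip : ∀ a b, |g a - g b| ≤ Lg * ‖a - b‖)
    (h : EuclideanSpace ℝ (Fin n) → ℝ) (M : ℝ) (z x : EuclideanSpace ℝ (Fin n)) :
    sModel p F g h M z x ≤ fObj F g h z + (M + Lg * ‖Lp‖) / (p + 1)! * ‖z - x‖ ^ (p + 1) := by
  have := abs_le.mp (abs_comp_euclMap_sub_comp_taylorMap_le hF hFlip hLg hglip z x)
  simp only [fObj, sModel, add_div, add_mul] at *
  linarith

end CompositeModel

section Step

variable {p : ℕ}

theorem le_rpow_one_div_of_add_div_mul_pow_le {a b b₀ A K μ : ℝ} (hK : 0 < K) (hμ : 0 < μ)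
    (ha : 0 ≤ a) (hb : b₀ ≤ b) (h : b + μ / K * a ^ (p + 1) ≤ A) :
    a ≤ (K * (A - b₀) / μ) ^ ((1 : ℝ) / (p + 1)) := by
  have hA : 0 ≤ A - b₀ := by
    have : 0 ≤ μ / K * a ^ (p + 1) := by positivity
    linarith
  rw [one_div, Real.le_rpow_inv_iff_of_pos ha (by positivity) (by positivity),
    show (p : ℝ) + 1 = (p + 1 : ℕ) by push_cast; rfl, Real.rpow_natCast, le_div_iff₀ hμ]
  calc a ^ (p + 1) * μ = K * (μ / K * a ^ (p + 1)) := by field_simp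
    _ ≤ K * (A - b₀) := by gcongr; linarith

theorem add_div_mul_pow_le_of_inexact {E : Type*} [SeminormedAddCommGroup E] {f : E → ℝ}
    {s : E → E → ℝ} {C : Set E} {K c M δ D f₀ : ℝ} {x x' y : E} (hK : 0 < K) (hM : c ≤ M)
    (hlow : ∀ z, f z + (M - c) / K * ‖z - x‖ ^ (p + 1) ≤ s z x)
    (hhigh : s y x ≤ f y + (M + c) / K * ‖y - x‖ ^ (p + 1))
    (hlb : ∀ z ∈ C, f₀ ≤ f z) (hyC : y ∈ C) (hyD : ‖y - x‖ ≤ D)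
    (hinx : s x' x - sInf ((fun z => s z x) '' {z | z ∈ C ∧ ‖z - x‖ ≤ D}) ≤
      δ / K * ‖x' - x‖ ^ (p + 1)) :
    f x' + (M - c) / K * ‖x' - x‖ ^ (p + 1) ≤
      f y + (M + c) / K * ‖y - x‖ ^ (p + 1) + δ / K * ‖x' - x‖ ^ (p + 1) := by
  have hbdd : BddBelow ((fun z => s z x) '' {z | z ∈ C ∧ ‖z - x‖ ≤ D}) := by
    refine ⟨f₀, ?_⟩
    rintro _ ⟨z, ⟨hzC, -⟩, rfl⟩
    have : 0 ≤ (M - c) / K * ‖z - x‖ ^ (p + 1) := by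
      have := sub_nonneg.mpr hM
      positivity
    linarith [hlow z, hlb z hzC]
  have := csInf_le hbdd ⟨y, ⟨hyC, hyD⟩, rfl⟩
  linarith [hlow x']

theorem pow_le_div_mul_of_descent {r f₀ f₁ K c M : ℝ} (hK : 0 < K) (hM : c < M)
    (h : f₁ + (M - c) / K * r ^ (p + 1) ≤ f₀) : r ^ (p + 1) ≤ K / (M - c) * (f₀ - f₁) := by
  rw [div_mul_eq_mul_div, le_div_iff₀ (sub_pos.mpr hM)]
  calc r ^ (p + 1) * (M - c) = K * ((M - c) / K * r ^ (p + 1)) := by field_simp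
    _ ≤ K * (f₀ - f₁) := by gcongr; linarith

theorem pow_le_mul_pow_of_inexact_of_prox {r s f₁ f₂ K c M μ δ : ℝ} (hK : 0 < K)
    (hμ : M + c < μ)
    (hinexact : f₁ + (M - c) / K * r ^ (p + 1) ≤
      f₂ + (M + c) / K * s ^ (p + 1) + δ / K * r ^ (p + 1))
    (hprox : f₂ + μ / K * s ^ (p + 1) ≤ f₁ + μ / K * r ^ (p + 1)) :
    s ^ (p + 1) ≤ (μ + δ + c - M) / (μ - (M + c)) * r ^ (p + 1) := by
  rw [div_mul_eq_mul_div, le_div_iff₀ (sub_pos.mpr hμ)]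
  have : (μ - (M + c)) / K * s ^ (p + 1) ≤ (μ + δ + c - M) / K * r ^ (p + 1) := by
    simp only [sub_div, add_div, sub_mul, add_mul] at *
    linarith
  calc s ^ (p + 1) * (μ - (M + c)) = K * ((μ - (M + c)) / K * s ^ (p + 1)) := by field_simp
    _ ≤ K * ((μ + δ + c - M) / K * r ^ (p + 1)) := by gcongr
    _ = (μ + δ + c - M) * r ^ (p + 1) := by field_simp

theorem pow_rpow_eq_pow_succ_rpow {s : ℝ} (hs : 0 ≤ s) (q : ℝ) :
    (s ^ p) ^ q = (s ^ (p + 1)) ^ ((p : ℝ) * q / (p + 1)) := by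
  rw [← Real.rpow_natCast, ← Real.rpow_natCast, ← Real.rpow_mul hs, ← Real.rpow_mul hs]
  congr 1
  push_cast
  field_simp

theorem sub_le_of_rhota_step {r s f₀ f₁ f₂ f₀' K c M μ δ Lμ a σ q C₁ C₂ : ℝ} (hK : 0 < K)
    (hc : 0 ≤ c) (hM : c < M) (hμ : M + c < μ) (hδ : 0 ≤ δ) (hr : 0 ≤ r) (hs : 0 ≤ s)
    (ha : 0 ≤ a) (hσ : 0 ≤ σ) (hq : 0 ≤ q)
    (hdesc : f₁ + (M - c) / K * r ^ (p + 1) ≤ f₀)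
    (hinexact : f₁ + (M - c) / K * r ^ (p + 1) ≤
      f₂ + (M + c) / K * s ^ (p + 1) + δ / K * r ^ (p + 1))
    (hprox : f₂ + μ / K * s ^ (p + 1) ≤ f₁ + μ / K * r ^ (p + 1))
    (hKL : f₂ - f₀' ≤ σ * (a * s ^ p) ^ q)
    (hLμ : Lμ = (μ + δ + c - M) / (μ - (M + c)))
    (hC₁ : C₁ = σ * Lμ ^ ((p : ℝ) * q / (p + 1)) * a ^ q *
      (K / (M - c)) ^ ((p : ℝ) * q / (p + 1)))
    (hC₂ : C₂ = (Lμ * (M + c) + δ + c - M) / (M - c)) :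
    f₁ - f₀' ≤ C₁ * (f₀ - f₁) ^ ((p : ℝ) * q / (p + 1)) + C₂ * (f₀ - f₁) := by
  set α := (p : ℝ) * q / (p + 1)
  have hr_desc := pow_le_div_mul_of_descent hK hM hdesc
  have hΔ : 0 ≤ f₀ - f₁ := by
    have : 0 ≤ (M - c) / K * r ^ (p + 1) := by positivity
    linarith
  have hLμ_one : 1 ≤ Lμ := by
    rw [hLμ, le_div_iff₀ (by linarith)]
    linarith
  have hsr : s ^ (p + 1) ≤ Lμ * r ^ (p + 1) := by
    rw [hLμ]
    exact pow_le_mul_pow_of_inexact_of_prox hK hμ hinexact hprox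
  have hcoef : 0 ≤ Lμ * (M + c) + δ + c - M := by nlinarith
  have hKL_term : σ * (a * s ^ p) ^ q ≤ C₁ * (f₀ - f₁) ^ α := by
    rw [Real.mul_rpow ha (by positivity), pow_rpow_eq_pow_succ_rpow hs]
    calc σ * (a ^ q * (s ^ (p + 1)) ^ α) ≤ σ * (a ^ q * (Lμ * (K / (M - c) * (f₀ - f₁))) ^ α) := by
          gcongr
          exact hsr.trans (by gcongr)
      _ = C₁ * (f₀ - f₁) ^ α := by
          rw [Real.mul_rpow (by positivity) (by positivity), Real.mul_rpow (by positivity) hΔ, hC₁]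
          ring
  have hpow_term : (M + c) / K * s ^ (p + 1) + (δ + c - M) / K * r ^ (p + 1) ≤ C₂ * (f₀ - f₁) :=
    calc (M + c) / K * s ^ (p + 1) + (δ + c - M) / K * r ^ (p + 1)
        ≤ (M + c) / K * (Lμ * r ^ (p + 1)) + (δ + c - M) / K * r ^ (p + 1) := by
          gcongr ?_ + _
          exact mul_le_mul_of_nonneg_left hsr (div_nonneg (by linarith) hK.le)
      _ = (Lμ * (M + c) + δ + c - M) / K * r ^ (p + 1) := by ring
      _ ≤ (Lμ * (M + c) + δ + c - M) / K * (K / (M - c) * (f₀ - f₁)) :=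
          mul_le_mul_of_nonneg_left hr_desc (div_nonneg hcoef hK.le)
      _ = C₂ * (f₀ - f₁) := by rw [hC₂]; field_simp
  simp only [sub_div, add_div, sub_mul, add_mul] at *
  linarith

end Step

theorem stmt9_general {n m : ℕ} (hm : 1 ≤ m) (p : ℕ)
    (F : Fin m → EuclideanSpace ℝ (Fin n) → ℝ)
    (Lp : EuclideanSpace ℝ (Fin m))
    (hFd : ∀ i, ContDiff ℝ p (F i))
    (hFlip : ∀ i (x y : EuclideanSpace ℝ (Fin n)),
      ‖iteratedFDeriv ℝ p (F i) x - iteratedFDeriv ℝ p (F i) y‖ ≤ Lp i * ‖x - y‖)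
    (g : EuclideanSpace ℝ (Fin m) → ℝ) (Lg : ℝ)
    (hglip : ∀ a b : EuclideanSpace ℝ (Fin m), |g a - g b| ≤ Lg * ‖a - b‖)
    (C : Set (EuclideanSpace ℝ (Fin n)))
    (h : EuclideanSpace ℝ (Fin n) → ℝ)
    (fstar : ℝ) (hlb : ∀ x ∈ C, fstar ≤ fObj F g h x)
    (M μ δ : ℝ) (hM : Lg * ‖Lp‖ < M) (hμ : M + Lg * ‖Lp‖ < μ) (hδ : 0 ≤ δ)
    (x : ℕ → EuclideanSpace ℝ (Fin n)) (hxC : ∀ k, x k ∈ C)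
    (hdes : ∀ k, sModel p F g h M (x (k + 1)) (x k) ≤ sModel p F g h M (x k) (x k))
    (D : ℕ → ℝ) (hD : ∀ k, D k = ((Nat.factorial (p + 1) : ℝ) *
      (fObj F g h (x k) - fstar) / μ) ^ ((1 : ℝ) / (p + 1)))
    (hinx : ∀ k, sModel p F g h M (x (k + 1)) (x k) -
        sInf ((fun z => sModel p F g h M z (x k)) '' {z | z ∈ C ∧ ‖z - x k‖ ≤ D k}) ≤
      δ / (Nat.factorial (p + 1) : ℝ) * ‖x (k + 1) - x k‖ ^ (p + 1))
    (y : ℕ → EuclideanSpace ℝ (Fin n)) (hyC : ∀ k, y (k + 1) ∈ C)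
    (hy : ∀ k, ∀ z ∈ C,
      fObj F g h (y (k + 1)) +
          μ / (Nat.factorial (p + 1) : ℝ) * ‖y (k + 1) - x k‖ ^ (p + 1) ≤
        fObj F g h z + μ / (Nat.factorial (p + 1) : ℝ) * ‖z - x k‖ ^ (p + 1))
    (Lμ : ℝ) (hLμ : Lμ = (μ + δ + Lg * ‖Lp‖ - M) / (μ - (M + Lg * ‖Lp‖)))
    (fstar2 : ℝ)
    (σq q : ℝ) (hσq : 0 < σq) (hq : 0 < q)
    (hKL : ∀ k, fObj F g h (y (k + 1)) - fstar2 ≤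
      σq * (μ / (Nat.factorial p : ℝ) * ‖y (k + 1) - x k‖ ^ p) ^ q)
    (C₁ C₂ : ℝ)
    (hC₁ : C₁ = σq * Lμ ^ ((p : ℝ) * q / (p + 1)) * (μ / (Nat.factorial p : ℝ)) ^ q *
      ((Nat.factorial (p + 1) : ℝ) / (M - Lg * ‖Lp‖)) ^ ((p : ℝ) * q / (p + 1)))
    (hC₂ : C₂ = (Lμ * (M + Lg * ‖Lp‖) + δ + Lg * ‖Lp‖ - M) / (M - Lg * ‖Lp‖)) :
    ∀ k, fObj F g h (x (k + 1)) - fstar2 ≤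
      C₁ * (fObj F g h (x k) - fObj F g h (x (k + 1))) ^ ((p : ℝ) * q / (p + 1)) +
      C₂ * (fObj F g h (x k) - fObj F g h (x (k + 1))) := by
  intro k
  have hK : (0 : ℝ) < (p + 1)! := by positivity
  have : NeZero m := ⟨by omega⟩
  have hLg : 0 ≤ Lg := nonneg_of_forall_abs_sub_le_mul_norm hglip
  have hc : 0 ≤ Lg * ‖Lp‖ := by positivity
  have hμ₀ : 0 < μ := by linarith
  have hlow := fObj_add_le_sModel hFd hFlip hLg hglip h M
  have hdesc := (hlow (x (k + 1)) (x k)).trans ((hdes k).trans_eq (sModel_self p F g h M (x k)))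
  have hyD : ‖y (k + 1) - x k‖ ≤ D k := by
    rw [hD k]
    refine le_rpow_one_div_of_add_div_mul_pow_le hK hμ₀ (norm_nonneg _)
      (hlb _ (hyC k)) ?_
    simpa using hy k (x k) (hxC k)
  have hinexact := add_div_mul_pow_le_of_inexact hK hM.le (hlow · (x k))
    (sModel_le_fObj_add hFd hFlip hLg hglip h M _ _) hlb (hyC k) hyD (hinx k)
  exact sub_le_of_rhota_step hK hc hM hμ hδ (norm_nonneg _) (norm_nonneg _)
    (by positivity) hσq.le hq.le hdesc hinexact (hy k _ (hxC (k + 1))) (hKL k) hLμ hC₁ hC₂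

/-- the key recurrence in function values under a KL-type bound at the
proximal points, leading to the improved convergence rates of RHOTA. -/
theorem stmt9 {n m : ℕ} (hn : 1 ≤ n) (hm : 1 ≤ m) (p : ℕ) (hp : 1 ≤ p)
    (F : Fin m → EuclideanSpace ℝ (Fin n) → ℝ)
    (Lp : EuclideanSpace ℝ (Fin m))
    (hFd : ∀ i, ContDiff ℝ p (F i))
    (hFlip : ∀ i (x y : EuclideanSpace ℝ (Fin n)),
      ‖iteratedFDeriv ℝ p (F i) x - iteratedFDeriv ℝ p (F i) y‖ ≤ Lp i * ‖x - y‖)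
    (g : EuclideanSpace ℝ (Fin m) → ℝ) (Lg : ℝ)
    (hgconv : ConvexOn ℝ Set.univ g)
    (hglip : ∀ a b : EuclideanSpace ℝ (Fin m), |g a - g b| ≤ Lg * ‖a - b‖)
    (C : Set (EuclideanSpace ℝ (Fin n))) (hCne : C.Nonempty) (hCcl : IsClosed C)
    (hCcv : Convex ℝ C)
    (h : EuclideanSpace ℝ (Fin n) → ℝ) (hhconv : ConvexOn ℝ Set.univ h)
    (hhlsc : LowerSemicontinuous h)
    (fstar : ℝ) (hlb : ∀ x ∈ C, fstar ≤ fObj F g h x)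
    (M μ δ : ℝ) (hM : Lg * ‖Lp‖ < M) (hμ : M + Lg * ‖Lp‖ < μ) (hδ : 0 ≤ δ)
    (x : ℕ → EuclideanSpace ℝ (Fin n)) (hxC : ∀ k, x k ∈ C)
    (hdes : ∀ k, sModel p F g h M (x (k + 1)) (x k) ≤ sModel p F g h M (x k) (x k))
    (D : ℕ → ℝ) (hD : ∀ k, D k = ((Nat.factorial (p + 1) : ℝ) *
      (fObj F g h (x k) - fstar) / μ) ^ ((1 : ℝ) / (p + 1)))
    (hinx : ∀ k, sModel p F g h M (x (k + 1)) (x k) -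
        sInf ((fun z => sModel p F g h M z (x k)) '' {z | z ∈ C ∧ ‖z - x k‖ ≤ D k}) ≤
      δ / (Nat.factorial (p + 1) : ℝ) * ‖x (k + 1) - x k‖ ^ (p + 1))
    (y : ℕ → EuclideanSpace ℝ (Fin n)) (hyC : ∀ k, y (k + 1) ∈ C)
    (hy : ∀ k, ∀ z ∈ C,
      fObj F g h (y (k + 1)) +
          μ / (Nat.factorial (p + 1) : ℝ) * ‖y (k + 1) - x k‖ ^ (p + 1) ≤
        fObj F g h z + μ / (Nat.factorial (p + 1) : ℝ) * ‖z - x k‖ ^ (p + 1))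
    (Lμ : ℝ) (hLμ : Lμ = (μ + δ + Lg * ‖Lp‖ - M) / (μ - (M + Lg * ‖Lp‖)))
    (fstar2 : ℝ) (hfstar2 : ∀ k, fstar2 ≤ fObj F g h (x k))
    (σq q : ℝ) (hσq : 0 < σq) (hq : 0 < q)
    (hKL : ∀ k, fObj F g h (y (k + 1)) - fstar2 ≤
      σq * (μ / (Nat.factorial p : ℝ) * ‖y (k + 1) - x k‖ ^ p) ^ q)
    (C₁ C₂ : ℝ)
    (hC₁ : C₁ = σq * Lμ ^ ((p : ℝ) * q / (p + 1)) * (μ / (Nat.factorial p : ℝ)) ^ q *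
      ((Nat.factorial (p + 1) : ℝ) / (M - Lg * ‖Lp‖)) ^ ((p : ℝ) * q / (p + 1)))
    (hC₂ : C₂ = (Lμ * (M + Lg * ‖Lp‖) + δ + Lg * ‖Lp‖ - M) / (M - Lg * ‖Lp‖)) :
    ∀ k, fObj F g h (x (k + 1)) - fstar2 ≤
      C₁ * (fObj F g h (x k) - fObj F g h (x (k + 1))) ^ ((p : ℝ) * q / (p + 1)) +
      C₂ * (fObj F g h (x k) - fObj F g h (x (k + 1))) :=
  stmt9_general hm p F Lp hFd hFlip g Lg hglip C h fstar hlb M μ δ hM hμ hδ x hxC hdes D hD hinx y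
    hyC hy Lμ hLμ fstar2 σq q hσq hq hKL C₁ C₂ hC₁ hC₂

end
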